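/- Let D be a modified Rota-Baxter operator of weight λ on a (possibly non-unital) associative K-algebra A, and let π^D(x,y) = D(x)·y + x·D(y) be the induced associative product on A. Define linear maps ρ^D, μ^D : A → End(A) by ρ^D(x)(y) = D(x)·y − D(x·y) and μ^D(x)(y) = y·D(x) − D(y·x). Then (A; ρ^D, μ^D) is a representation of the associative algebra (A, π^D); that is, for all x, y ∈ A: ρ^D(π^D(x,y)) = ρ^D(x)∘ρ^D(y), μ^D(π^D(x,y)) = μ^D(y)∘μ^D(x), and ρ^D(x)∘μ^D(y) = μ^D(y)∘ρ^D(x). -/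
import Mathlib


/-- The product `π^D(x,y) = D(x)·y + x·D(y)` induced by a modified Rota-Baxter operator. -/
def piD {K : Type*} [Field K] {A : Type*} [AddCommGroup A] [Module K A]
    (m : A →ₗ[K] A →ₗ[K] A) (D : A →ₗ[K] A) (x y : A) : A :=
  m (D x) y + m x (D y)

/-- `ρ^D(x)(y) = D(x)·y − D(x·y)`. -/
def rhoD {K : Type*} [Field K] {A : Type*} [AddCommGroup A] [Module K A]
    (m : A →ₗ[K] A →ₗ[K] A) (D : A →ₗ[K] A) (x y : A) : A :=
  m (D x) y - D (m x y)

/-- `μ^D(x)(y) = y·D(x) − D(y·x)`. -/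
def muD {K : Type*} [Field K] {A : Type*} [AddCommGroup A] [Module K A]
    (m : A →ₗ[K] A →ₗ[K] A) (D : A →ₗ[K] A) (x y : A) : A :=
  m y (D x) - D (m y x)

/-- `(A; ρ^D, μ^D)` is a representation of the associative algebra `(A, π^D)`. -/
theorem stmt3 {K : Type*} [Field K] {A : Type*} [AddCommGroup A] [Module K A]
    (m : A →ₗ[K] A →ₗ[K] A)
    (assoc : ∀ x y z : A, m (m x y) z = m x (m y z)) (lam : K)
    (D : A →ₗ[K] A)
    (hD : ∀ x y : A, m (D x) (D y) - D (m x (D y)) - D (m (D x) y) = -(lam • m x y)) :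
    (∀ x y z : A, rhoD m D (piD m D x y) z = rhoD m D x (rhoD m D y z)) ∧
    (∀ x y z : A, muD m D (piD m D x y) z = muD m D y (muD m D x z)) ∧
    (∀ x y z : A, rhoD m D x (muD m D y z) = muD m D y (rhoD m D x z)) := by
  refine ⟨?_, ?_, ?_⟩
  · intro x y z
    have h1 := congrArg (fun a => m a z) (hD x y)
    have h2 := hD x (m y z)
    simp only [map_sub, map_neg, map_smul, LinearMap.sub_apply, LinearMap.neg_apply,
      LinearMap.smul_apply, assoc] at h1
    simp only [rhoD, piD, map_add, map_sub, LinearMap.add_apply, LinearMap.sub_apply, assoc]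
    linear_combination (norm := module) h2 - h1
  · intro x y z
    have h1 := congrArg (fun a => m z a) (hD x y)
    have h2 := hD (m z x) y
    simp only [map_sub, map_neg, map_smul] at h1
    simp only [assoc] at h2
    simp only [muD, piD, map_add, map_sub, LinearMap.add_apply, LinearMap.sub_apply, assoc]
    linear_combination (norm := module) h2 - h1
  · intro x y z
    have h1 := hD x (m z y)
    have h2 := hD (m x z) y
    simp only [assoc] at h2
    simp only [rhoD, muD, map_sub, LinearMap.sub_apply, assoc]
    linear_combination (norm := module) h2 - h1
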